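/- The function f(x) = -√(1 - (1+x)^{-2}) is convex on [0, ∞). -/

import Mathlib

open Set

theorem ConcaveOn.comp_of_mapsTo {𝕜 E β γ : Type*} [Semiring 𝕜] [PartialOrder 𝕜]
    [AddCommMonoid E] [SMul 𝕜 E] [AddCommMonoid β] [PartialOrder β] [SMul 𝕜 β]
    [AddCommMonoid γ] [PartialOrder γ] [SMul 𝕜 γ] {s : Set E} {t : Set β} {f : E → β}
    {g : β → γ} (hg : ConcaveOn 𝕜 t g) (hf : ConcaveOn 𝕜 s f) (hg' : MonotoneOn g t)
    (hst : MapsTo f s t) : ConcaveOn 𝕜 s (g ∘ f) :=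
  ⟨hf.1, fun _ hx _ hy _ _ ha hb hab =>
    (hg.2 (hst hx) (hst hy) ha hb hab).trans <|
      hg' (hg.1 (hst hx) (hst hy) ha hb hab) (hst (hf.1 hx hy ha hb hab)) (hf.2 hx hy ha hb hab)⟩

theorem convexOn_inv_one_add_sq : ConvexOn ℝ (Ioi (-1)) fun x : ℝ => ((1 + x) ^ 2)⁻¹ := by
  have h := (convexOn_zpow (𝕜 := ℝ) (-2)).translate_right 1
  rw [show (fun z : ℝ => 1 + z) ⁻¹' Ioi 0 = Ioi (-1) by ext; simp [neg_lt_iff_pos_add]] at h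
  simpa [Function.comp_def, zpow_neg] using h

theorem concaveOn_one_sub_inv_one_add_sq :
    ConcaveOn ℝ (Ioi (-1)) fun x : ℝ => 1 - ((1 + x) ^ 2)⁻¹ :=
  (concaveOn_const 1 (convex_Ioi _)).sub convexOn_inv_one_add_sq

theorem one_sub_inv_one_add_sq_nonneg {x : ℝ} (hx : 0 ≤ x) : 0 ≤ 1 - ((1 + x) ^ 2)⁻¹ :=
  sub_nonneg.2 <| inv_le_one_of_one_le₀ <| one_le_pow₀ <| by linarith

theorem neg_sqrt_dispersion_convex :
    ConvexOn ℝ (Set.Ici (0 : ℝ))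
      (fun x : ℝ => -Real.sqrt (1 - ((1 + x) ^ 2)⁻¹)) := by
  have hconc : ConcaveOn ℝ (Ici 0) fun x : ℝ => 1 - ((1 + x) ^ 2)⁻¹ :=
    concaveOn_one_sub_inv_one_add_sq.subset (Ici_subset_Ioi.2 (by norm_num)) (convex_Ici 0)
  have hsqrt := Real.strictConcaveOn_sqrt.concaveOn.comp_of_mapsTo hconc
    (fun _ _ _ _ hab => Real.sqrt_le_sqrt hab) fun _ hx => one_sub_inv_one_add_sq_nonneg hx
  exact hsqrt.neg
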